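/- Let g be a Lorentzian metric on E, l a null vector field, and X, Y vector fields that are nil-Killing with respect to l with [X,l] = f_1·l and [Y,l] = f_2·l for smooth functions f_1, f_2 : E → ℝ, and suppose additionally that g_x(l(x), Y(x)) = 0 for all x. Then [X,Y] is nil-Killing with respect to l, [[X,Y], l] is pointwise proportional to l, and g_x(l(x), [X,Y](x)) = 0 for all x ∈ E. (Hence h_l = {X ∈ {l}⊥ : [X,l] ∝ l, X nil-Killing with respect to l} is an ideal of the Lie algebra g_l.) -/

import Mathlib

set_option maxHeartbeats 1000000

variable {E : Type*}
/-- The Lie bracket of two vector fields on a normed space: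
`[X,Y](x) = (DY)_x(X x) - (DX)_x(Y x)`. -/
noncomputable def vfLieBracket [NormedAddCommGroup E] [NormedSpace ℝ E]
    (X Y : E → E) : E → E :=
  fun x => fderiv ℝ Y x (X x) - fderiv ℝ X x (Y x)

/-- The Lie derivative of a smooth field of (continuous) bilinear forms `T` along a vector
field `X`: `(L_X T)_x (v, w) = (DT)_x(X x)(v, w) + T_x((DX)_x v, w) + T_x(v, (DX)_x w)`. -/
noncomputable def lieDerivSym [NormedAddCommGroup E] [NormedSpace ℝ E]
    (X : E → E) (T : E → (E →L[ℝ] E →L[ℝ] ℝ)) (x : E) :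
    E →L[ℝ] E →L[ℝ] ℝ :=
  fderiv ℝ T x (X x) + (T x).comp (fderiv ℝ X x)
    + ((ContinuousLinearMap.compL ℝ E E ℝ).flip (fderiv ℝ X x)).comp (T x)

/-- A bilinear form `B` is nilpotent with respect to a vector `v` (relative to the bilinear
form `gx`): `B(v, z) = 0` for all `z`, and `B(w, w') = 0` whenever `w, w' ⊥ v`. -/
def NilpotentWrt [NormedAddCommGroup E] [NormedSpace ℝ E]
    (gx B : E →L[ℝ] E →L[ℝ] ℝ) (v : E) : Prop :=
  (∀ z : E, B v z = 0) ∧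
    ∀ w w' : E, gx v w = 0 → gx v w' = 0 → B w w' = 0

/-- A (continuous) bilinear form on `E` is (nondegenerate of) Lorentzian signature if it is
diagonal `(-1, 1, …, 1)` with respect to some basis. -/
def IsLorentzianForm [NormedAddCommGroup E] [NormedSpace ℝ E]
    (B : E →L[ℝ] E →L[ℝ] ℝ) : Prop :=
  ∃ b : Module.Basis (Fin (Module.finrank ℝ E)) ℝ E,
    ∀ i j, B (b i) (b j) =
      if i = j then (if (i : ℕ) = 0 then (-1 : ℝ) else 1) else 0
open Topology
section AuxNilKilling
variable [NormedAddCommGroup E] [NormedSpace ℝ E]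

noncomputable abbrev clm2ACG : AddCommGroup (E →L[ℝ] E →L[ℝ] ℝ) := inferInstance
noncomputable abbrev clm2NACG : NormedAddCommGroup (E →L[ℝ] E →L[ℝ] ℝ) := inferInstance
noncomputable abbrev clm2NS : NormedSpace ℝ (E →L[ℝ] E →L[ℝ] ℝ) := inferInstance
attribute [local instance] clm2ACG clm2NACG clm2NS

lemma lieDerivSym_apply (X : E → E) (T : E → (E →L[ℝ] E →L[ℝ] ℝ)) (x v w : E) :
    lieDerivSym X T x v w
      = fderiv ℝ T x (X x) v w + T x (fderiv ℝ X x v) w + T x v (fderiv ℝ X x w) := by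
  simp [lieDerivSym]

lemma fd_apply {F : Type*} [NormedAddCommGroup F] [NormedSpace ℝ F]
    {C : E → (E →L[ℝ] F)} {a : E → E} {x : E}
    (hC : DifferentiableAt ℝ C x) (ha : DifferentiableAt ℝ a x) (m : E) :
    fderiv ℝ (fun y => C y (a y)) x m = fderiv ℝ C x m (a x) + C x (fderiv ℝ a x m) := by
  rw [fderiv_clm_apply hC ha]
  simp [add_comm]

lemma fd_apply_const {F : Type*} [NormedAddCommGroup F] [NormedSpace ℝ F]
    {C : E → (E →L[ℝ] F)} {x : E}
    (hC : DifferentiableAt ℝ C x) (v m : E) :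
    fderiv ℝ (fun y => C y v) x m = fderiv ℝ C x m v := by
  rw [fd_apply hC (differentiableAt_const v) m]
  simp

lemma fd_apply_const2 {C : E → (E →L[ℝ] E →L[ℝ] ℝ)} {x : E}
    (hC : DifferentiableAt ℝ C x) (v w m : E) :
    fderiv ℝ (fun y => C y v w) x m = fderiv ℝ C x m v w := by
  have h1 : DifferentiableAt ℝ (fun y => C y v) x := hC.clm_apply (differentiableAt_const v)
  rw [show (fun y => C y v w) = fun y => (fun z => C z v) y w from rfl,
    fd_apply_const h1 w m, fd_apply_const hC v m]

lemma fd_g3 {g : E → (E →L[ℝ] E →L[ℝ] ℝ)} {a b : E → E} {x : E}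
    (hg : DifferentiableAt ℝ g x) (ha : DifferentiableAt ℝ a x) (hb : DifferentiableAt ℝ b x)
    (m : E) :
    fderiv ℝ (fun y => g y (a y) (b y)) x m
      = fderiv ℝ g x m (a x) (b x) + g x (fderiv ℝ a x m) (b x) + g x (a x) (fderiv ℝ b x m) := by
  have h1 : DifferentiableAt ℝ (fun y => g y (a y)) x := hg.clm_apply ha
  rw [show (fun y => g y (a y) (b y)) = fun y => (fun z => g z (a z)) y (b y) from rfl,
    fd_apply h1 hb m, fd_apply hg ha m]
  simp

lemma lorentz_nondeg {B : E →L[ℝ] E →L[ℝ] ℝ} (hB : IsLorentzianForm B)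
    {v : E} (hv : v ≠ 0) : ∃ n : E, B v n ≠ 0 := by
  obtain ⟨b, hb⟩ := hB
  by_contra h
  push_neg at h
  apply hv
  have key : ∀ j, B v (b j) = b.repr v j * (if (j : ℕ) = 0 then (-1 : ℝ) else 1) := by
    intro j
    conv_lhs => rw [← b.sum_repr v]
    rw [map_sum]
    simp only [map_smul, ContinuousLinearMap.coe_sum', Finset.sum_apply,
      ContinuousLinearMap.coe_smul', Pi.smul_apply, hb, smul_eq_mul, mul_ite, mul_zero]
    rw [Finset.sum_ite_eq' Finset.univ j]
    simp [mul_ite]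
  have hrepr : b.repr v = 0 := by
    ext j
    have hk := key j
    rw [h (b j)] at hk
    rcases eq_or_ne ((j : ℕ)) 0 with hj | hj <;> simp [hj] at hk <;> simp [hk]
  have := congrArg b.repr.symm hrepr
  simpa using this

lemma transfer
    (g : E → (E →L[ℝ] E →L[ℝ] ℝ)) (hg : ContDiff ℝ (⊤ : ℕ∞) g)
    (hg_lor : ∀ x : E, IsLorentzianForm (g x))
    (l : E → E) (hl : ContDiff ℝ (⊤ : ℕ∞) l) (hl_null : ∀ x : E, l x ≠ 0)
    (X : E → E) (hX : ContDiff ℝ (⊤ : ℕ∞) X)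
    (hX_nil1 : ∀ x z : E, lieDerivSym X g x (l x) z = 0)
    (f₁ : E → ℝ) (hXl : ∀ x : E, vfLieBracket X l x = f₁ x • l x)
    (B : E → (E →L[ℝ] E →L[ℝ] ℝ)) (hB : Differentiable ℝ B)
    (hBnil : ∀ x : E, NilpotentWrt (g x) (B x) (l x)) (x : E) :
    NilpotentWrt (g x) (lieDerivSym X B x) (l x) := by
  have hgd : Differentiable ℝ g := hg.differentiable (by simp)
  have hld : Differentiable ℝ l := hl.differentiable (by simp)
  have hXd : Differentiable ℝ X := hX.differentiable (by simp)
  have hbr : fderiv ℝ l x (X x) - fderiv ℝ X x (l x) = f₁ x • l x := hXl x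
  have hDXl : fderiv ℝ X x (l x) = fderiv ℝ l x (X x) - f₁ x • l x := by
    rw [← hbr]; abel
  constructor
  · intro z
    rw [lieDerivSym_apply]
    have h0 : fderiv ℝ (fun y => B y (l y) z) x = 0 := by
      have hz : (fun y => B y (l y) z) = fun _ => (0 : ℝ) := funext fun y => (hBnil y).1 z
      rw [hz]; exact fderiv_const_apply 0
    have h1 := fd_g3 (hB x) (hld x) (differentiableAt_const z) (X x)
    rw [h0] at h1
    simp only [ContinuousLinearMap.zero_apply, fderiv_const, fderiv_fun_const, Pi.zero_apply, map_zero] at h1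
    have h2 : B x (l x) (fderiv ℝ X x z) = 0 := (hBnil x).1 _
    have h3 : B x (fderiv ℝ X x (l x)) z = B x (fderiv ℝ l x (X x)) z - f₁ x * B x (l x) z := by
      rw [hDXl]; simp
    have h4 : B x (l x) z = 0 := (hBnil x).1 _
    rw [h2, h3, h4] at *
    linarith
  · intro w w' hw hw'
    obtain ⟨n, hn⟩ := lorentz_nondeg (hg_lor x) (hl_null x)
    have hgl : Differentiable ℝ (fun y => g y (l y)) := fun y => (hgd y).clm_apply (hld y)
    set φ : E → ℝ := fun y => g y (l y) n with hφdef
    have hφd : Differentiable ℝ φ := fun y => (hgl y).clm_apply (differentiableAt_const n)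
    have hφx : φ x ≠ 0 := hn
    have hφne : ∀ᶠ y in 𝓝 x, φ y ≠ 0 := (hφd.continuous.continuousAt).eventually_ne hφx
    -- generic construction
    have main : ∀ u : E, g x (l x) u = 0 →
        ∃ W : E → E, W x = u ∧ DifferentiableAt ℝ W x ∧
          (∀ᶠ y in 𝓝 x, g y (l y) (W y) = 0) ∧
          g x (l x) (fderiv ℝ W x (X x)) = g x (l x) (fderiv ℝ X x u) := by
      intro u hu
      refine ⟨fun y => u - ((g y (l y) u) * (φ y)⁻¹) • n, ?_, ?_, ?_, ?_⟩
      · simp [hu]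
      · apply (differentiableAt_const u).sub
        have hnum : DifferentiableAt ℝ (fun y => g y (l y) u) x :=
          (hgl x).clm_apply (differentiableAt_const u)
        have hq : DifferentiableAt ℝ (fun y => g y (l y) u * (φ y)⁻¹) x :=
          hnum.mul ((hφd x).inv hφx)
        exact hq.smul (differentiableAt_const n)
      · filter_upwards [hφne] with y hy
        simp only [map_sub, map_smul, smul_eq_mul]
        field_simp
        simp [hφdef]
      · -- differentiate the eventually-zero function
        set W : E → E := fun y => u - ((g y (l y) u) * (φ y)⁻¹) • n with hWdef
        have hWx : W x = u := by simp [hWdef, hu]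
        have hWd : DifferentiableAt ℝ W x := by
          apply (differentiableAt_const u).sub
          have hnum : DifferentiableAt ℝ (fun y => g y (l y) u) x :=
            (hgl x).clm_apply (differentiableAt_const u)
          have hq : DifferentiableAt ℝ (fun y => g y (l y) u * (φ y)⁻¹) x :=
            hnum.mul ((hφd x).inv hφx)
          exact hq.smul (differentiableAt_const n)
        have hev : (fun y => g y (l y) (W y)) =ᶠ[𝓝 x] fun _ => (0 : ℝ) := by
          filter_upwards [hφne] with y hy
          simp only [hWdef, map_sub, map_smul, smul_eq_mul]
          field_simp
          simp [hφdef]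
        have h0 : fderiv ℝ (fun y => g y (l y) (W y)) x = 0 := by
          rw [hev.fderiv_eq]; exact fderiv_const_apply 0
        have h1 := fd_g3 (hgd x) (hld x) hWd (X x)
        rw [h0, hWx] at h1
        simp only [ContinuousLinearMap.zero_apply] at h1
        have h2 := hX_nil1 x u
        rw [lieDerivSym_apply] at h2
        have h3 : g x (fderiv ℝ X x (l x)) u
            = g x (fderiv ℝ l x (X x)) u - f₁ x * g x (l x) u := by
          rw [hDXl]; simp
        rw [h3, hu] at h2
        linarith
    obtain ⟨W, hWx, hWd, hWev, hWp⟩ := main w hw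
    obtain ⟨W', hWx', hWd', hWev', hWp'⟩ := main w' hw'
    have hev : (fun y => B y (W y) (W' y)) =ᶠ[𝓝 x] fun _ => (0 : ℝ) := by
      filter_upwards [hWev, hWev'] with y h1 h2
      exact (hBnil y).2 _ _ h1 h2
    have h0 : fderiv ℝ (fun y => B y (W y) (W' y)) x = 0 := by
      rw [hev.fderiv_eq]; exact fderiv_const_apply 0
    have h1 := fd_g3 (hB x) hWd hWd' (X x)
    rw [h0, hWx, hWx'] at h1
    simp only [ContinuousLinearMap.zero_apply] at h1
    -- bracket perpendicularity
    have e1 : B x (fderiv ℝ W x (X x) - fderiv ℝ X x w) w' = 0 := by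
      apply (hBnil x).2 _ _ _ hw'
      rw [map_sub, hWp]
      ring
    have e2 : B x w (fderiv ℝ W' x (X x) - fderiv ℝ X x w') = 0 := by
      apply (hBnil x).2 _ _ hw
      rw [map_sub, hWp']
      ring
    rw [map_sub, ContinuousLinearMap.sub_apply] at e1
    rw [map_sub] at e2
    rw [lieDerivSym_apply]
    linarith

lemma bracket_deriv (X l : E → E) (hX : ContDiff ℝ (⊤ : ℕ∞) X) (hl : ContDiff ℝ (⊤ : ℕ∞) l)
    (f : E → ℝ) (hf : ContDiff ℝ (⊤ : ℕ∞) f) (hXl : ∀ y, vfLieBracket X l y = f y • l y) (x u : E) :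
    fderiv ℝ (fderiv ℝ l) x u (X x) + fderiv ℝ l x (fderiv ℝ X x u)
      - fderiv ℝ (fderiv ℝ X) x u (l x) - fderiv ℝ X x (fderiv ℝ l x u)
    = fderiv ℝ f x u • l x + f x • fderiv ℝ l x u := by
  have hld : Differentiable ℝ l := hl.differentiable (by simp)
  have hXd : Differentiable ℝ X := hX.differentiable (by simp)
  have hld' : Differentiable ℝ (fderiv ℝ l) := (hl.fderiv_right (m := 1) (WithTop.coe_le_coe.2 le_top)).differentiable one_ne_zero
  have hXd' : Differentiable ℝ (fderiv ℝ X) := (hX.fderiv_right (m := 1) (WithTop.coe_le_coe.2 le_top)).differentiable one_ne_zero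
  have h1 : DifferentiableAt ℝ (fun y => fderiv ℝ l y (X y)) x := (hld' x).clm_apply (hXd x)
  have h2 : DifferentiableAt ℝ (fun y => fderiv ℝ X y (l y)) x := (hXd' x).clm_apply (hld x)
  have hfun : (fun y => fderiv ℝ l y (X y) - fderiv ℝ X y (l y)) = fun y => f y • l y :=
    funext hXl
  have e : fderiv ℝ (fun y => fderiv ℝ l y (X y) - fderiv ℝ X y (l y)) x u
      = fderiv ℝ (fun y => f y • l y) x u := by rw [hfun]
  rw [fderiv_fun_sub h1 h2, fderiv_fun_smul (hf.differentiable (by simp) x) (hld x)] at e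
  rw [ContinuousLinearMap.sub_apply, fd_apply (hld' x) (hXd x) u,
    fd_apply (hXd' x) (hld x) u] at e
  simp only [ContinuousLinearMap.add_apply, ContinuousLinearMap.coe_smul', Pi.smul_apply,
    ContinuousLinearMap.smulRight_apply] at e
  linear_combination (norm := module) e

lemma part2_calc (X Y l : E → E) (hX : ContDiff ℝ (⊤ : ℕ∞) X) (hY : ContDiff ℝ (⊤ : ℕ∞) Y)
    (hl : ContDiff ℝ (⊤ : ℕ∞) l) (f₁ f₂ : E → ℝ) (hf₁ : ContDiff ℝ (⊤ : ℕ∞) f₁) (hf₂ : ContDiff ℝ (⊤ : ℕ∞) f₂)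
    (hXl : ∀ y, vfLieBracket X l y = f₁ y • l y)
    (hYl : ∀ y, vfLieBracket Y l y = f₂ y • l y) (x : E) :
    vfLieBracket (vfLieBracket X Y) l x
      = (fderiv ℝ f₂ x (X x) - fderiv ℝ f₁ x (Y x)) • l x := by
  have hld : Differentiable ℝ l := hl.differentiable (by simp)
  have hXd : Differentiable ℝ X := hX.differentiable (by simp)
  have hYd : Differentiable ℝ Y := hY.differentiable (by simp)
  have hld' : Differentiable ℝ (fderiv ℝ l) := (hl.fderiv_right (m := 1) (WithTop.coe_le_coe.2 le_top)).differentiable one_ne_zero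
  have hXd' : Differentiable ℝ (fderiv ℝ X) := (hX.fderiv_right (m := 1) (WithTop.coe_le_coe.2 le_top)).differentiable one_ne_zero
  have hYd' : Differentiable ℝ (fderiv ℝ Y) := (hY.fderiv_right (m := 1) (WithTop.coe_le_coe.2 le_top)).differentiable one_ne_zero
  have hA : DifferentiableAt ℝ (fun y => fderiv ℝ Y y (X y)) x := (hYd' x).clm_apply (hXd x)
  have hB : DifferentiableAt ℝ (fun y => fderiv ℝ X y (Y y)) x := (hXd' x).clm_apply (hYd x)
  have hZ : fderiv ℝ (vfLieBracket X Y) x (l x)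
      = fderiv ℝ (fderiv ℝ Y) x (l x) (X x) + fderiv ℝ Y x (fderiv ℝ X x (l x))
        - fderiv ℝ (fderiv ℝ X) x (l x) (Y x) - fderiv ℝ X x (fderiv ℝ Y x (l x)) := by
    have hrw : vfLieBracket X Y
        = fun y => (fun z => fderiv ℝ Y z (X z)) y - (fun z => fderiv ℝ X z (Y z)) y := rfl
    rw [hrw, fderiv_fun_sub hA hB, ContinuousLinearMap.sub_apply,
      fd_apply (hYd' x) (hXd x) (l x), fd_apply (hXd' x) (hYd x) (l x)]
    abel
  have e1 := bracket_deriv Y l hY hl f₂ hf₂ hYl x (X x)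
  have e2 := bracket_deriv X l hX hl f₁ hf₁ hXl x (Y x)
  have p1 : fderiv ℝ l x (X x) - fderiv ℝ X x (l x) = f₁ x • l x := hXl x
  have p2 : fderiv ℝ l x (Y x) - fderiv ℝ Y x (l x) = f₂ x • l x := hYl x
  have s1 : fderiv ℝ (fderiv ℝ l) x (X x) (Y x) = fderiv ℝ (fderiv ℝ l) x (Y x) (X x) :=
    (hl.contDiffAt.isSymmSndFDerivAt (by rw [minSmoothness_of_isRCLikeNormedField]; exact WithTop.coe_le_coe.2 le_top)) (X x) (Y x)
  have s2 : fderiv ℝ (fderiv ℝ Y) x (X x) (l x) = fderiv ℝ (fderiv ℝ Y) x (l x) (X x) :=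
    (hY.contDiffAt.isSymmSndFDerivAt (by rw [minSmoothness_of_isRCLikeNormedField]; exact WithTop.coe_le_coe.2 le_top)) (X x) (l x)
  have s3 : fderiv ℝ (fderiv ℝ X) x (Y x) (l x) = fderiv ℝ (fderiv ℝ X) x (l x) (Y x) :=
    (hX.contDiffAt.isSymmSndFDerivAt (by rw [minSmoothness_of_isRCLikeNormedField]; exact WithTop.coe_le_coe.2 le_top)) (Y x) (l x)
  have q1 : fderiv ℝ Y x (fderiv ℝ l x (X x)) - fderiv ℝ Y x (fderiv ℝ X x (l x))
      = f₁ x • fderiv ℝ Y x (l x) := by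
    rw [← map_sub, p1, map_smul]
  have q2 : fderiv ℝ X x (fderiv ℝ l x (Y x)) - fderiv ℝ X x (fderiv ℝ Y x (l x))
      = f₂ x • fderiv ℝ X x (l x) := by
    rw [← map_sub, p2, map_smul]
  have hgoal : vfLieBracket (vfLieBracket X Y) l x
      = fderiv ℝ l x (fderiv ℝ Y x (X x)) - fderiv ℝ l x (fderiv ℝ X x (Y x))
        - fderiv ℝ (vfLieBracket X Y) x (l x) := by
    show fderiv ℝ l x (vfLieBracket X Y x) - _ = _
    rw [show vfLieBracket X Y x = fderiv ℝ Y x (X x) - fderiv ℝ X x (Y x) from rfl, map_sub]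
  rw [hgoal, hZ]
  linear_combination (norm := module) e1 - e2 - s1 + s2 - s3 + q1 - q2 + f₂ x • p1 - f₁ x • p2

lemma lieDerivSym_contDiff (g : E → (E →L[ℝ] E →L[ℝ] ℝ)) (hg : ContDiff ℝ (⊤ : ℕ∞) g)
    (Y : E → E) (hY : ContDiff ℝ (⊤ : ℕ∞) Y) :
    ContDiff ℝ (⊤ : ℕ∞) (fun y => lieDerivSym Y g y) := by
  unfold lieDerivSym
  refine ContDiff.add (ContDiff.add ?_ ?_) ?_
  · exact (hg.fderiv_right (by simp)).clm_apply (hY.of_le (by simp))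
  · exact (hg.of_le (by simp)).clm_comp (hY.fderiv_right (by simp))
  · exact (((ContinuousLinearMap.compL ℝ E E ℝ).flip.contDiff).comp
      (hY.fderiv_right (m := ((⊤ : ℕ∞) : WithTop ℕ∞)) (by simp))).clm_comp (hg.of_le le_rfl)

lemma lie_comm (g : E → (E →L[ℝ] E →L[ℝ] ℝ)) (hg : ContDiff ℝ (⊤ : ℕ∞) g)
    (X Y : E → E) (hX : ContDiff ℝ (⊤ : ℕ∞) X) (hY : ContDiff ℝ (⊤ : ℕ∞) Y) (x v w : E) :
    lieDerivSym (vfLieBracket X Y) g x v w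
      = lieDerivSym X (fun y => lieDerivSym Y g y) x v w
        - lieDerivSym Y (fun y => lieDerivSym X g y) x v w := by
  have hgd : Differentiable ℝ g := hg.differentiable (by simp)
  have hXd : Differentiable ℝ X := hX.differentiable (by simp)
  have hYd : Differentiable ℝ Y := hY.differentiable (by simp)
  have hgd' : Differentiable ℝ (fderiv ℝ g) := (hg.fderiv_right (m := 1) (WithTop.coe_le_coe.2 le_top)).differentiable one_ne_zero
  have hXd' : Differentiable ℝ (fderiv ℝ X) := (hX.fderiv_right (m := 1) (WithTop.coe_le_coe.2 le_top)).differentiable one_ne_zero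
  have hYd' : Differentiable ℝ (fderiv ℝ Y) := (hY.fderiv_right (m := 1) (WithTop.coe_le_coe.2 le_top)).differentiable one_ne_zero
  -- derivative of the bracket
  have hZ : ∀ m : E, fderiv ℝ (vfLieBracket X Y) x m
      = fderiv ℝ (fderiv ℝ Y) x m (X x) + fderiv ℝ Y x (fderiv ℝ X x m)
        - fderiv ℝ (fderiv ℝ X) x m (Y x) - fderiv ℝ X x (fderiv ℝ Y x m) := by
    intro m
    have hA : DifferentiableAt ℝ (fun y => fderiv ℝ Y y (X y)) x := (hYd' x).clm_apply (hXd x)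
    have hB : DifferentiableAt ℝ (fun y => fderiv ℝ X y (Y y)) x := (hXd' x).clm_apply (hYd x)
    have hrw : vfLieBracket X Y
        = fun y => (fun z => fderiv ℝ Y z (X z)) y - (fun z => fderiv ℝ X z (Y z)) y := rfl
    rw [hrw, fderiv_fun_sub hA hB, ContinuousLinearMap.sub_apply,
      fd_apply (hYd' x) (hXd x) m, fd_apply (hXd' x) (hYd x) m]
    abel
  -- derivative of a Lie-derivative field, applied to constants
  have key : ∀ (W : E → E), ContDiff ℝ (⊤ : ℕ∞) W → ∀ m : E,
      fderiv ℝ (fun y => lieDerivSym W g y) x m v w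
        = fderiv ℝ (fderiv ℝ g) x m (W x) v w + fderiv ℝ g x (fderiv ℝ W x m) v w
          + fderiv ℝ g x m (fderiv ℝ W x v) w + g x (fderiv ℝ (fderiv ℝ W) x m v) w
          + fderiv ℝ g x m v (fderiv ℝ W x w) + g x v (fderiv ℝ (fderiv ℝ W) x m w) := by
    intro W hW m
    have hWd : Differentiable ℝ W := hW.differentiable (by simp)
    have hWd' : Differentiable ℝ (fderiv ℝ W) := (hW.fderiv_right (m := 1) (WithTop.coe_le_coe.2 le_top)).differentiable one_ne_zero
    have hSd : DifferentiableAt ℝ (fun y => lieDerivSym W g y) x :=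
      (lieDerivSym_contDiff g hg W hW).differentiable (by simp) x
    rw [← fd_apply_const2 hSd v w m]
    have hsplit : (fun y => lieDerivSym W g y v w)
        = fun y => ((fderiv ℝ g y (W y) v w) + (g y (fderiv ℝ W y v) w))
            + (g y v (fderiv ℝ W y w)) := by
      funext y; rw [lieDerivSym_apply]
    have hC : DifferentiableAt ℝ (fun y => fderiv ℝ g y (W y)) x := (hgd' x).clm_apply (hWd x)
    have ht1 : DifferentiableAt ℝ (fun y => fderiv ℝ g y (W y) v w) x :=
      (hC.clm_apply (differentiableAt_const v)).clm_apply (differentiableAt_const w)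
    have hav : DifferentiableAt ℝ (fun y => fderiv ℝ W y v) x :=
      (hWd' x).clm_apply (differentiableAt_const v)
    have haw : DifferentiableAt ℝ (fun y => fderiv ℝ W y w) x :=
      (hWd' x).clm_apply (differentiableAt_const w)
    have ht2 : DifferentiableAt ℝ (fun y => g y (fderiv ℝ W y v) w) x :=
      ((hgd x).clm_apply hav).clm_apply (differentiableAt_const w)
    have ht3 : DifferentiableAt ℝ (fun y => g y v (fderiv ℝ W y w)) x :=
      ((hgd x).clm_apply (differentiableAt_const v)).clm_apply haw
    rw [hsplit, fderiv_fun_add (ht1.fun_add ht2) ht3, fderiv_fun_add ht1 ht2]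
    simp only [ContinuousLinearMap.add_apply]
    -- t1
    have d1 : fderiv ℝ (fun y => fderiv ℝ g y (W y) v w) x m
        = fderiv ℝ (fderiv ℝ g) x m (W x) v w + fderiv ℝ g x (fderiv ℝ W x m) v w := by
      rw [show (fun y => fderiv ℝ g y (W y) v w) = (fun y => (fun z => fderiv ℝ g z (W z)) y v w) from rfl,
        fd_apply_const2 hC v w m, fd_apply (hgd' x) (hWd x) m]
      simp
    -- t2
    have d2 : fderiv ℝ (fun y => g y (fderiv ℝ W y v) w) x m
        = fderiv ℝ g x m (fderiv ℝ W x v) w + g x (fderiv ℝ (fderiv ℝ W) x m v) w := by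
      rw [fd_g3 (hgd x) hav (differentiableAt_const w) m, fd_apply_const (hWd' x) v m]
      simp
    -- t3
    have d3 : fderiv ℝ (fun y => g y v (fderiv ℝ W y w)) x m
        = fderiv ℝ g x m v (fderiv ℝ W x w) + g x v (fderiv ℝ (fderiv ℝ W) x m w) := by
      rw [fd_g3 (hgd x) (differentiableAt_const v) haw m, fd_apply_const (hWd' x) w m]
      simp
    rw [d1, d2, d3]; ring
  -- symmetry facts
  have sg : fderiv ℝ (fderiv ℝ g) x (X x) (Y x) v w
      = fderiv ℝ (fderiv ℝ g) x (Y x) (X x) v w := by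
    rw [(hg.contDiffAt.isSymmSndFDerivAt (by rw [minSmoothness_of_isRCLikeNormedField]; exact WithTop.coe_le_coe.2 le_top)) (X x) (Y x)]
  have sYv : fderiv ℝ (fderiv ℝ Y) x (X x) v = fderiv ℝ (fderiv ℝ Y) x v (X x) :=
    (hY.contDiffAt.isSymmSndFDerivAt (by rw [minSmoothness_of_isRCLikeNormedField]; exact WithTop.coe_le_coe.2 le_top)) (X x) v
  have sYw : fderiv ℝ (fderiv ℝ Y) x (X x) w = fderiv ℝ (fderiv ℝ Y) x w (X x) :=
    (hY.contDiffAt.isSymmSndFDerivAt (by rw [minSmoothness_of_isRCLikeNormedField]; exact WithTop.coe_le_coe.2 le_top)) (X x) w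
  have sXv : fderiv ℝ (fderiv ℝ X) x (Y x) v = fderiv ℝ (fderiv ℝ X) x v (Y x) :=
    (hX.contDiffAt.isSymmSndFDerivAt (by rw [minSmoothness_of_isRCLikeNormedField]; exact WithTop.coe_le_coe.2 le_top)) (Y x) v
  have sXw : fderiv ℝ (fderiv ℝ X) x (Y x) w = fderiv ℝ (fderiv ℝ X) x w (Y x) :=
    (hX.contDiffAt.isSymmSndFDerivAt (by rw [minSmoothness_of_isRCLikeNormedField]; exact WithTop.coe_le_coe.2 le_top)) (Y x) w
  -- expand everything
  rw [lieDerivSym_apply (vfLieBracket X Y) g x v w, lieDerivSym_apply X _ x v w,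
    lieDerivSym_apply Y _ x v w, key Y hY (X x), key X hX (Y x), hZ v, hZ w,
    lieDerivSym_apply Y g x (fderiv ℝ X x v) w, lieDerivSym_apply Y g x v (fderiv ℝ X x w),
    lieDerivSym_apply X g x (fderiv ℝ Y x v) w, lieDerivSym_apply X g x v (fderiv ℝ Y x w)]
  have hZx : vfLieBracket X Y x = fderiv ℝ Y x (X x) - fderiv ℝ X x (Y x) := rfl
  rw [hZx]
  simp only [map_sub, map_add, ContinuousLinearMap.sub_apply, ContinuousLinearMap.add_apply,
    sYv, sYw, sXv, sXw]
  linarith [sg]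

end AuxNilKilling

/-- If `X, Y` are nil-Killing with respect to the null vector field `l` with
`[X,l] = f₁ • l`, `[Y,l] = f₂ • l`, and additionally `Y ⊥ l`, then `[X,Y]` is nil-Killing
with respect to `l`, `[[X,Y], l]` is pointwise proportional to `l`, and `[X,Y] ⊥ l`.
(Hence `h_l` is an ideal of the Lie algebra `g_l`.) -/
theorem stmt15 [NormedAddCommGroup E] [NormedSpace ℝ E] [FiniteDimensional ℝ E]
    (g : E → (E →L[ℝ] E →L[ℝ] ℝ)) (hg : ContDiff ℝ (⊤ : ℕ∞) g)
    (hg_symm : ∀ (x v w : E), g x v w = g x w v)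
    (hg_lor : ∀ x : E, IsLorentzianForm (g x))
    (l : E → E) (hl : ContDiff ℝ (⊤ : ℕ∞) l)
    (hl_null : ∀ x : E, l x ≠ 0 ∧ g x (l x) (l x) = 0)
    (X Y : E → E) (hX : ContDiff ℝ (⊤ : ℕ∞) X) (hY : ContDiff ℝ (⊤ : ℕ∞) Y)
    (hX_nil : ∀ x : E, NilpotentWrt (g x) (lieDerivSym X g x) (l x))
    (hY_nil : ∀ x : E, NilpotentWrt (g x) (lieDerivSym Y g x) (l x))
    (f₁ f₂ : E → ℝ) (hf₁ : ContDiff ℝ (⊤ : ℕ∞) f₁) (hf₂ : ContDiff ℝ (⊤ : ℕ∞) f₂)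
    (hXl : ∀ x : E, vfLieBracket X l x = f₁ x • l x)
    (hYl : ∀ x : E, vfLieBracket Y l x = f₂ x • l x)
    (hY_perp : ∀ x : E, g x (l x) (Y x) = 0) :
    (∀ x : E, NilpotentWrt (g x) (lieDerivSym (vfLieBracket X Y) g x) (l x)) ∧
      (∀ x : E, ∃ c : ℝ, vfLieBracket (vfLieBracket X Y) l x = c • l x) ∧
      (∀ x : E, g x (l x) (vfLieBracket X Y x) = 0) := by
  have hgd : Differentiable ℝ g := hg.differentiable (by simp)
  have hld : Differentiable ℝ l := hl.differentiable (by simp)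
  have hXd : Differentiable ℝ X := hX.differentiable (by simp)
  have hYd : Differentiable ℝ Y := hY.differentiable (by simp)
  have hDXl : ∀ x : E, fderiv ℝ X x (l x) = fderiv ℝ l x (X x) - f₁ x • l x := by
    intro x
    have := hXl x
    rw [show vfLieBracket X l x = fderiv ℝ l x (X x) - fderiv ℝ X x (l x) from rfl] at this
    rw [← this]; abel
  refine ⟨?_, ?_, ?_⟩
  · -- nil-Killing
    intro x
    have hS := transfer g hg hg_lor l hl (fun y => (hl_null y).1) X hX
      (fun y z => (hX_nil y).1 z) f₁ hXl (fun y => lieDerivSym Y g y)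
      ((lieDerivSym_contDiff g hg Y hY).differentiable (by simp)) hY_nil x
    have hT := transfer g hg hg_lor l hl (fun y => (hl_null y).1) Y hY
      (fun y z => (hY_nil y).1 z) f₂ hYl (fun y => lieDerivSym X g y)
      ((lieDerivSym_contDiff g hg X hX).differentiable (by simp)) hX_nil x
    constructor
    · intro z
      rw [lie_comm g hg X Y hX hY x (l x) z, hS.1 z, hT.1 z]
      ring
    · intro w w' hw hw'
      rw [lie_comm g hg X Y hX hY x w w', hS.2 w w' hw hw', hT.2 w w' hw hw']
      ring
  · -- proportionality
    intro x
    exact ⟨fderiv ℝ f₂ x (X x) - fderiv ℝ f₁ x (Y x),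
      part2_calc X Y l hX hY hl f₁ f₂ hf₁ hf₂ hXl hYl x⟩
  · -- perpendicularity
    intro x
    have h0 : fderiv ℝ (fun y => g y (l y) (Y y)) x = 0 := by
      have hz : (fun y => g y (l y) (Y y)) = fun _ => (0 : ℝ) := funext hY_perp
      rw [hz]; exact fderiv_const_apply 0
    have h1 := fd_g3 (hgd x) (hld x) (hYd x) (X x)
    rw [h0] at h1
    simp only [ContinuousLinearMap.zero_apply] at h1
    have h2 := (hX_nil x).1 (Y x)
    rw [lieDerivSym_apply] at h2
    have h3 : g x (fderiv ℝ X x (l x)) (Y x)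
        = g x (fderiv ℝ l x (X x)) (Y x) - f₁ x * g x (l x) (Y x) := by
      rw [hDXl x]; simp
    have h4 := hY_perp x
    rw [h4, mul_zero, sub_zero] at h3
    rw [show vfLieBracket X Y x = fderiv ℝ Y x (X x) - fderiv ℝ X x (Y x) from rfl, map_sub]
    linarith
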